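/- arXiv:0911.2832 — 3 statements merged into one kernel-verified Lean document; each statement's English description precedes it below -/
import Mathlib

section
/- Let p be an odd prime and g a primitive root modulo p, and let b be an integer with p ∤ b. Then for every N with 1 ≤ N ≤ p−1, the exponential sum ∑_{x=1}^{N} e^{2πi b g^x / p} has absolute value O(p^{1/2} log p). -/
/-!
Since `g` generates `(ZMod p)ˣ`, the summand `e_p(b g^x)` only depends on `x` modulo `n = p - 1`.
Fourier inversion on `ZMod n` writes the incomplete sum as `n⁻¹ ∑ₖ Dₖ Gₖ`, where
`Gₖ = ∑_{j mod n} e_n(-jk) e_p(b g^j)` is the Gauss sum of `e_p(b ·)` with the multiplicative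
character sending `g` to `e_n(-k)`, so `|Gₖ| ≤ √p`, and `Dₖ = ∑_{x=1}^N e_n(kx)` is a geometric sum
with `|Dₖ| ≤ 1 / sin (π k / n)`. Jordan's inequality `sin (π t) ≥ 2 t (1 - t)` turns `∑ₖ |Dₖ|` into
a harmonic sum, which is at most `n (2 + log n)`.
-/

open Finset Complex Real

theorem two_mul_mul_one_sub_le_sin_pi_mul {t : ℝ} (h₀ : 0 ≤ t) (h₁ : t ≤ 1) :
    2 * t * (1 - t) ≤ Real.sin (π * t) := by
  rcases le_total t (1 / 2) with ht | ht
  · have := Real.mul_le_sin (x := π * t) (by positivity) (by nlinarith [pi_pos])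
    rw [← mul_assoc, div_mul_cancel₀ _ pi_ne_zero] at this
    nlinarith
  · have := Real.mul_le_sin (x := π * (1 - t)) (by nlinarith [pi_pos]) (by nlinarith [pi_pos])
    rw [← mul_assoc, div_mul_cancel₀ _ pi_ne_zero, show π * (1 - t) = π - π * t by ring,
      Real.sin_pi_sub] at this
    nlinarith

theorem norm_sum_Icc_pow_mul_norm_sub_one_le {ζ : ℂ} (hζ : ‖ζ‖ = 1) (N : ℕ) :
    ‖∑ x ∈ Icc 1 N, ζ ^ x‖ * ‖ζ - 1‖ ≤ 2 := by
  rw [← norm_mul, ← Ico_add_one_right_eq_Icc, geom_sum_Ico_mul _ (by omega)]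
  calc ‖ζ ^ (N + 1) - ζ ^ 1‖ ≤ ‖ζ ^ (N + 1)‖ + ‖ζ ^ 1‖ := norm_sub_le _ _
    _ = 2 := by simp [hζ]; norm_num

theorem sum_range_inv_add_inv_eq_two_mul_harmonic (m : ℕ) :
    ∑ a ∈ range m, (((a + 1 : ℕ) : ℝ)⁻¹ + ((m + 1 : ℕ) - ((a + 1 : ℕ) : ℝ))⁻¹) =
      2 * harmonic m := by
  rw [sum_add_distrib, ← sum_range_reflect (fun a ↦ (((m + 1 : ℕ) : ℝ) - (a + 1 : ℕ))⁻¹)]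
  have hreflect : ∀ a ∈ range m,
      (((m + 1 : ℕ) : ℝ) - ((m - 1 - a + 1 : ℕ) : ℝ))⁻¹ = ((a + 1 : ℕ) : ℝ)⁻¹ := by
    intro a ha
    rw [mem_range] at ha
    rw [show m - 1 - a + 1 = m - a by omega, Nat.cast_sub ha.le]
    push_cast
    ring_nf
  rw [sum_congr rfl hreflect, harmonic]
  push_cast
  ring

theorem mem_zpowers_of_orderOf_eq_natCard {G : Type*} [Group G] [Finite G] {g : G}
    (hg : orderOf g = Nat.card G) (x : G) : x ∈ Subgroup.zpowers g := by
  rw [Subgroup.eq_top_of_card_eq (Subgroup.zpowers g) (by rw [Nat.card_zpowers, hg])]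
  exact Subgroup.mem_top x

theorem IsCyclic.sum_eq_sum_zmod_pow {G M : Type*} [Group G] [Fintype G] [AddCommMonoid M]
    {g : G} (hg : ∀ x, x ∈ Subgroup.zpowers g) (f : G → M) :
    ∑ x, f x = ∑ j : ZMod (Fintype.card G), f (g ^ j.val) :=
  (Fintype.sum_bijective _ (Function.bijective_iff_existsUnique _ |>.2 fun x ↦
    (IsCyclic.unique_zpow_zmod hg x).imp fun _ ↦ And.imp Eq.symm fun h y hy ↦ h y hy.symm)
    _ _ fun _ ↦ rfl).symm

theorem MulChar.sum_mul_eq_sum_units {R R' : Type*} [CommMonoid R] [Fintype R] [DecidableEq R]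
    [CommSemiring R'] (χ : MulChar R R') (f : R → R') :
    ∑ a, χ a * f a = ∑ u : Rˣ, χ u * f u := by
  refine Eq.trans ?_ (sum_map univ ⟨_, Units.val_injective⟩ fun a ↦ χ a * f a)
  refine (sum_subset (subset_univ _) fun a _ ha ↦ ?_).symm
  have : ¬IsUnit a := fun ⟨u, hu⟩ ↦ ha (mem_map.2 ⟨u, mem_univ _, hu⟩)
  rw [χ.map_nonunit this, zero_mul]

theorem norm_gaussSum_le {F : Type*} [Field F] [Fintype F] (χ : MulChar F ℂ)
    {ψ : AddChar F ℂ} (hψ : ψ.IsPrimitive) : ‖gaussSum χ ψ‖ ≤ √(Fintype.card F) := by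
  by_cases hχ : χ = 1
  · have hψ₁ : ψ ≠ 1 := by simpa using hψ one_ne_zero
    rw [hχ, gaussSum_one_left hψ₁, norm_neg, norm_one, Real.one_le_sqrt]
    exact_mod_cast Fintype.card_pos
  · have h := gaussSum_mul_gaussSum_eq_card hχ hψ
    rw [← star_gaussSum_eq, RCLike.star_def, Complex.mul_conj] at h
    rw [Complex.norm_def, show normSq (gaussSum χ ψ) = Fintype.card F by exact_mod_cast h]

namespace ZMod

theorem sum_univ_eq_sum_range {M : Type*} [AddCommMonoid M] (n : ℕ) [NeZero n]
    (f : ZMod n → M) : ∑ k, f k = ∑ a ∈ range n, f a :=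
  sum_nbij' val (↑) (by simp [val_lt]) (by simp) (fun a _ ↦ natCast_zmod_val a)
    (fun a ha ↦ val_cast_of_lt (mem_range.1 ha)) (fun a _ ↦ by rw [natCast_zmod_val])

theorem norm_stdAddChar_natCast_sub_one (n a : ℕ) [NeZero n] :
    ‖stdAddChar (a : ZMod n) - 1‖ = 2 * |Real.sin (π * (a / n))| := by
  rw [stdAddChar_apply, toCircle_natCast,
    show 2 * π * I * a / n = I * ((2 * π * (a / n) : ℝ) : ℂ) by push_cast; ring,
    norm_exp_I_mul_ofReal_sub_one, norm_mul, Real.norm_eq_abs, Real.norm_eq_abs, abs_two]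
  ring_nf

theorem norm_sum_Icc_stdAddChar_le {n a : ℕ} [NeZero n] (ha : 0 < a) (han : a < n) (N : ℕ) :
    ‖∑ x ∈ Icc 1 N, stdAddChar ((a : ZMod n) * (x : ZMod n))‖ ≤
      n / 2 * ((a : ℝ)⁻¹ + ((n : ℝ) - a)⁻¹) := by
  set t : ℝ := a / n with ht
  have hn : (0 : ℝ) < n := by exact_mod_cast NeZero.pos n
  have ht₀ : 0 < t := by positivity
  have ht₁ : t < 1 := (div_lt_one hn).2 (by exact_mod_cast han)
  have hsin : 2 * t * (1 - t) ≤ Real.sin (π * t) :=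
    two_mul_mul_one_sub_le_sin_pi_mul ht₀.le ht₁.le
  have hpos : 0 < 2 * t * (1 - t) := mul_pos (by positivity) (by linarith)
  have hdist : ‖stdAddChar (a : ZMod n) - 1‖ = 2 * Real.sin (π * t) := by
    rw [norm_stdAddChar_natCast_sub_one, abs_of_pos (hpos.trans_le hsin)]
  have hgeom := norm_sum_Icc_pow_mul_norm_sub_one_le
    (ζ := stdAddChar (a : ZMod n)) (by simp [stdAddChar_apply, Circle.norm_coe]) N
  simp only [← AddChar.map_nsmul_eq_pow, nsmul_eq_mul, mul_comm _ (a : ZMod n), hdist] at hgeom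
  have hinv : n / 2 * ((a : ℝ)⁻¹ + ((n : ℝ) - a)⁻¹) = (2 * t * (1 - t))⁻¹ := by
    have : (0 : ℝ) < a := by exact_mod_cast ha
    have : (n : ℝ) - a ≠ 0 := by linarith [show (a : ℝ) < n by exact_mod_cast han]
    rw [ht]
    field_simp
    ring
  rw [hinv]
  calc _ ≤ 2 / (2 * Real.sin (π * t)) := (le_div_iff₀ (by linarith)).2 hgeom
    _ ≤ 2 / (2 * (2 * t * (1 - t))) := by gcongr
    _ = _ := by field_simp

theorem sum_norm_sum_Icc_stdAddChar_le {n N : ℕ} [NeZero n] (hN : N ≤ n) :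
    ∑ k : ZMod n, ‖∑ x ∈ Icc 1 N, stdAddChar (k * (x : ZMod n))‖ ≤ n * (2 + Real.log n) := by
  obtain ⟨m, rfl⟩ : ∃ m, n = m + 1 := Nat.exists_eq_succ_of_ne_zero (NeZero.ne n)
  rw [sum_univ_eq_sum_range, sum_range_succ']
  have hzero :
      ‖∑ x ∈ Icc 1 N, stdAddChar (((0 : ℕ) : ZMod (m + 1)) * (x : ZMod (m + 1)))‖ = N := by
    simp
  have hlog : (harmonic m : ℝ) ≤ 1 + Real.log (m + 1 : ℕ) := by
    refine (harmonic_le_one_add_log m).trans (add_le_add_right ?_ _)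
    rcases m.eq_zero_or_pos with rfl | hm
    · simp
    · exact Real.log_le_log (by positivity) (by simp)
  calc _ ≤ ∑ a ∈ range m, ((m + 1 : ℕ) : ℝ) / 2 *
          (((a + 1 : ℕ) : ℝ)⁻¹ + ((m + 1 : ℕ) - ((a + 1 : ℕ) : ℝ))⁻¹) + N := by
        refine add_le_add (sum_le_sum fun a ha ↦ ?_) hzero.le
        exact norm_sum_Icc_stdAddChar_le (by omega) (by simpa using ha) N
    _ = ((m + 1 : ℕ) : ℝ) * harmonic m + N := by
        rw [← mul_sum, sum_range_inv_add_inv_eq_two_mul_harmonic]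
        ring
    _ ≤ ((m + 1 : ℕ) : ℝ) * (1 + Real.log (m + 1 : ℕ)) + (m + 1 : ℕ) := by gcongr
    _ = _ := by ring

theorem sum_comp_eq_inv_mul_sum_dft {n : ℕ} [NeZero n] (Φ : ZMod n → ℂ) {ι : Type*}
    (s : Finset ι) (f : ι → ZMod n) :
    ∑ i ∈ s, Φ (f i) = (n : ℂ)⁻¹ * ∑ k, (∑ i ∈ s, stdAddChar (k * f i)) * 𝓕 Φ k := by
  conv_lhs => enter [2, i]; rw [← LinearEquiv.symm_apply_apply dft Φ, invDFT_apply]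
  simp only [smul_eq_mul, ← mul_sum, sum_mul]
  rw [sum_comm]

theorem norm_sum_comp_le_of_norm_dft_le {n : ℕ} [NeZero n] {Φ : ZMod n → ℂ} {B : ℝ}
    (hB : ∀ k, ‖𝓕 Φ k‖ ≤ B) {ι : Type*} (s : Finset ι) (f : ι → ZMod n) :
    ‖∑ i ∈ s, Φ (f i)‖ ≤ B / n * ∑ k, ‖∑ i ∈ s, stdAddChar (k * f i)‖ := by
  have hB₀ : 0 ≤ B := (norm_nonneg _).trans (hB 0)
  rw [sum_comp_eq_inv_mul_sum_dft, norm_mul, norm_inv, Complex.norm_natCast, div_eq_inv_mul,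
    mul_assoc, mul_sum]
  gcongr
  refine (norm_sum_le _ _).trans (sum_le_sum fun k _ ↦ ?_)
  rw [norm_mul, mul_comm]
  gcongr
  exact hB k

theorem exists_dft_addChar_pow_eq_gaussSum {F : Type*} [Field F] [Fintype F] [DecidableEq F]
    (ψ : AddChar F ℂ) {g : Fˣ} (hg : ∀ x, x ∈ Subgroup.zpowers g) (k : ZMod (Fintype.card Fˣ)) :
    ∃ χ : MulChar F ℂ, 𝓕 (fun j ↦ ψ ↑(g ^ j.val)) k = gaussSum χ ψ := by
  set ζ : ℂˣ := (stdAddChar.val_isUnit (-k)).unit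
  have hζ : ζ ∈ rootsOfUnity (Fintype.card Fˣ) ℂ := by
    rw [_root_.mem_rootsOfUnity, Units.ext_iff]
    simp [ζ, ← AddChar.map_nsmul_eq_pow]
  refine ⟨MulChar.ofRootOfUnity hζ hg, ?_⟩
  rw [gaussSum, MulChar.sum_mul_eq_sum_units, IsCyclic.sum_eq_sum_zmod_pow hg, dft_apply]
  refine sum_congr rfl fun j _ ↦ ?_
  rw [Units.val_pow_eq_pow_val, map_pow (MulChar.ofRootOfUnity hζ hg),
    MulChar.ofRootOfUnity_spec, smul_eq_mul]
  simp [ζ, ← AddChar.map_nsmul_eq_pow]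

end ZMod

section

open ZMod

theorem norm_sum_Icc_addChar_pow_le {F : Type*} [Field F] [Fintype F] [DecidableEq F]
    {ψ : AddChar F ℂ} (hψ : ψ.IsPrimitive) {g : Fˣ} (hg : orderOf g = Fintype.card Fˣ) {N : ℕ}
    (hN : N ≤ Fintype.card Fˣ) :
    ‖∑ x ∈ Icc 1 N, ψ ↑(g ^ x)‖ ≤ √(Fintype.card F) * (2 + Real.log (Fintype.card Fˣ)) := by
  set n := Fintype.card Fˣ
  have hgen := mem_zpowers_of_orderOf_eq_natCard (hg.trans Nat.card_eq_fintype_card.symm)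
  have hdft : ∀ k, ‖𝓕 (fun j : ZMod n ↦ ψ ↑(g ^ j.val)) k‖ ≤ √(Fintype.card F) := fun k ↦ by
    obtain ⟨χ, hχ⟩ := exists_dft_addChar_pow_eq_gaussSum ψ hgen k
    exact hχ ▸ norm_gaussSum_le χ hψ
  have hperiodic : ∀ x : ℕ, ψ ↑(g ^ x) = ψ ↑(g ^ (x : ZMod n).val) := fun x ↦ by
    rw [val_natCast, ← hg, pow_mod_orderOf]
  have hn : (0 : ℝ) < n := by exact_mod_cast Fintype.card_pos
  calc _ = ‖∑ x ∈ Icc 1 N, ψ ↑(g ^ (x : ZMod n).val)‖ := by simp only [← hperiodic]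
    _ ≤ √(Fintype.card F) / n * ∑ k, ‖∑ x ∈ Icc 1 N, stdAddChar (k * (x : ZMod n))‖ :=
        norm_sum_comp_le_of_norm_dft_le hdft _ _
    _ ≤ √(Fintype.card F) / n * (n * (2 + Real.log n)) := by
        gcongr
        exact sum_norm_sum_Icc_stdAddChar_le hN
    _ = _ := by field_simp

theorem norm_sum_Icc_exp_mul_pow_le {p : ℕ} [Fact p.Prime] {g b : ℤ}
    (hg : orderOf (g : ZMod p) = p - 1) (hb : ¬(p : ℤ) ∣ b) {N : ℕ} (hN : N ≤ p - 1) :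
    ‖∑ x ∈ Icc 1 N, Complex.exp (2 * π * I * ((b * g ^ x : ℤ) : ℂ) / p)‖ ≤
      √p * (2 + Real.log (p - 1 : ℕ)) := by
  have hfin : IsOfFinOrder (g : ZMod p) :=
    orderOf_pos_iff.1 (by have := (Fact.out : p.Prime).two_le; omega)
  have hu : orderOf hfin.unit = Fintype.card (ZMod p)ˣ := by
    rw [card_units, ← orderOf_units]
    exact hg
  set ψ := (stdAddChar (N := p)).mulShift b
  have hψ : ψ.IsPrimitive := AddChar.IsPrimitive.of_ne_one <|
    isPrimitive_stdAddChar p (by rwa [Ne, intCast_zmod_eq_zero_iff_dvd])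
  have hterm : ∀ x : ℕ,
      Complex.exp (2 * π * I * ((b * g ^ x : ℤ) : ℂ) / p) = ψ ↑(hfin.unit ^ x) := fun x ↦ by
    rw [← stdAddChar_coe]
    simp [ψ]
  have hbound := norm_sum_Icc_addChar_pow_le hψ hu (hN.trans_eq (card_units p).symm)
  rwa [ZMod.card, card_units, ← sum_congr rfl fun x _ ↦ hterm x] at hbound

end

theorem stmt0 :
    ∃ C > (0:ℝ), ∀ (p : ℕ) (g b : ℤ) (N : ℕ),
      p.Prime → Odd p → orderOf (g : ZMod p) = p - 1 → ¬ (p:ℤ) ∣ b →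
      1 ≤ N → N ≤ p - 1 →
      ‖(∑ x ∈ Finset.Icc 1 N,
          Complex.exp (2 * Real.pi * Complex.I * ((b * g ^ x : ℤ) : ℂ) / p))‖
        ≤ C * Real.sqrt p * Real.log p := by
  refine ⟨3, by norm_num, fun p g b N hp hodd hg hb _ hN ↦ ?_⟩
  have : Fact p.Prime := ⟨hp⟩
  have hp₃ : (3 : ℝ) ≤ p := by
    obtain ⟨k, rfl⟩ := hodd
    have := hp.two_le
    exact_mod_cast (by omega : 3 ≤ 2 * k + 1)
  have hlog₁ : 1 ≤ Real.log p := by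
    rw [Real.le_log_iff_exp_le (by positivity)]
    linarith [Real.exp_one_lt_d9]
  have hlog₂ : Real.log (p - 1 : ℕ) ≤ Real.log p :=
    Real.log_le_log (by norm_cast; have := hp.two_le; omega) (by norm_cast; omega)
  have hbound := norm_sum_Icc_exp_mul_pow_le hg hb hN
  nlinarith [Real.sqrt_nonneg p]
end

section
/- Let p be an odd prime, r ≥ 1 an integer, a, b, b_1, …, b_r integers with gcd(b, p) = 1, and g_1, …, g_r primitive roots modulo p. Define the averaged sum S_N = (1/φ(p−1)) ∑'_{g mod p} ∑_{x=1}^{N} e^{2πi(ax + b g^x + b_1 g_1^x + ⋯ + b_r g_r^x)/p}, where ∑' is over all primitive roots g modulo p. Then for every 1 ≤ N ≤ p−1 and every ε > 0, |S_N| ≪_ε p^{23/24 + ε}. -/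
/-!
Splitting off the terms not involving `g`, the sum is `∑ₓ w(x) T(x)` with `|w(x)| = 1` and
`T(x) = ∑_{ord u = p-1} e_p(b u^x)`. Möbius inversion over the order writes `T(x)` through the sums
over the groups `μ_m` of `m`-th roots of unity, `m ∣ p - 1`. The map `u ↦ u^x` sends `μ_m` onto a
subgroup `H` with fibres of size at most `gcd(m, x)`, and `|∑_{h ∈ H} e_p(b h)| ≤ √p` because
`∑_c |∑_{h ∈ H} e_p(c h)|² = p |H|` while the inner sum is constant on the coset `bH`. Hence
`|T(x)| ≤ √p ∑_{m ∣ p-1} gcd(m, x)`; summing over `x ≤ p - 1` and using `n ≤ φ(n) d(n)` gives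
`|S_N| ≤ d(p-1)³ √p`, and the divisor bound `d(n) ≪ n^{1/7}` turns this into `p^{13/14}`.
-/

open Finset ArithmeticFunction ArithmeticFunction.Moebius
open scoped Nat

namespace Nat

lemma le_totient_mul_card_divisors (n : ℕ) : n ≤ φ n * #n.divisors := by
  obtain rfl | hn := n.eq_zero_or_pos
  · simp
  calc n = ∑ d ∈ n.divisors, φ d := (sum_totient n).symm
    _ ≤ ∑ _d ∈ n.divisors, φ n := sum_le_sum fun d hd =>
      le_of_dvd (totient_pos.mpr hn) (totient_dvd_of_dvd (dvd_of_mem_divisors hd))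
    _ = φ n * #n.divisors := by rw [sum_const, smul_eq_mul, mul_comm]

lemma sum_gcd_le_card_divisors_mul {m : ℕ} (hm : m ≠ 0) (N : ℕ) :
    ∑ x ∈ Icc 1 N, m.gcd x ≤ #m.divisors * N := calc
  ∑ x ∈ Icc 1 N, m.gcd x ≤ ∑ x ∈ Icc 1 N, ∑ e ∈ m.divisors, if e ∣ x then e else 0 :=
    sum_le_sum fun x _ => by
      rw [← sum_filter]
      exact single_le_sum (f := id) (fun _ _ => zero_le _)
        (mem_filter.mpr ⟨mem_divisors.mpr ⟨gcd_dvd_left m x, hm⟩, gcd_dvd_right m x⟩)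
  _ = ∑ e ∈ m.divisors, ∑ x ∈ Ioc 0 N, if e ∣ x then e else 0 := by
    rw [sum_comm, ← Icc_add_one_left_eq_Ioc, zero_add]
  _ ≤ ∑ _e ∈ m.divisors, N := sum_le_sum fun e _ => by
    rw [← sum_filter, sum_const, smul_eq_mul, Ioc_filter_dvd_card_eq_div]
    exact div_mul_le_self N e
  _ = #m.divisors * N := by rw [sum_const, smul_eq_mul]

lemma sum_sum_gcd_le {n : ℕ} (hn : n ≠ 0) (N : ℕ) :
    ∑ x ∈ Icc 1 N, ∑ m ∈ n.divisors, m.gcd x ≤ #n.divisors ^ 2 * N := calc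
  ∑ x ∈ Icc 1 N, ∑ m ∈ n.divisors, m.gcd x = ∑ m ∈ n.divisors, ∑ x ∈ Icc 1 N, m.gcd x := sum_comm
  _ ≤ ∑ _m ∈ n.divisors, #n.divisors * N := sum_le_sum fun m hm =>
    (sum_gcd_le_card_divisors_mul (ne_of_gt (pos_of_mem_divisors hm)) N).trans <|
      Nat.mul_le_mul_right N (card_le_card (divisors_subset_of_dvd hn (dvd_of_mem_divisors hm)))
  _ = #n.divisors ^ 2 * N := by rw [sum_const, smul_eq_mul, ← mul_assoc, sq]

/-- A prime `q ≥ 2 ^ k` satisfies `(a + 1) ^ k ≤ q ^ a` outright; each of the fewer than `2 ^ k`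
smaller primes costs a factor `k ^ k`. -/
lemma succ_pow_le_mul_pow (k a : ℕ) {q : ℕ} (hq : 2 ≤ q) :
    (a + 1) ^ k ≤ (if q < 2 ^ k then k ^ k else 1) * q ^ a := by
  have ha : a + 1 ≤ 2 ^ a := a.lt_two_pow_self
  split_ifs with hqk
  · have hk : 0 < k := Nat.pos_of_ne_zero fun h => by simp [h] at hqk; omega
    have hdiv : a + 1 ≤ k * 2 ^ (a / k) :=
      (lt_mul_div_succ a hk).trans_le (Nat.mul_le_mul_left k (a / k).lt_two_pow_self)
    calc (a + 1) ^ k ≤ (k * 2 ^ (a / k)) ^ k := Nat.pow_le_pow_left hdiv k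
      _ = k ^ k * 2 ^ (a / k * k) := by rw [mul_pow, ← pow_mul]
      _ ≤ k ^ k * q ^ a := Nat.mul_le_mul_left _ <|
        (Nat.pow_le_pow_right two_pos (div_mul_le_self a k)).trans (Nat.pow_le_pow_left hq a)
  · calc (a + 1) ^ k ≤ (2 ^ a) ^ k := Nat.pow_le_pow_left ha k
      _ = (2 ^ k) ^ a := by rw [← pow_mul, ← pow_mul, mul_comm]
      _ ≤ 1 * q ^ a := by rw [one_mul]; exact Nat.pow_le_pow_left (not_lt.mp hqk) a

lemma card_divisors_pow_le (k : ℕ) {n : ℕ} (hn : n ≠ 0) :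
    #n.divisors ^ k ≤ (k ^ 2 ^ k) ^ k * n := by
  have hsmall : ∏ q ∈ n.primeFactors, (if q < 2 ^ k then k ^ k else 1) ≤ (k ^ 2 ^ k) ^ k := by
    rw [prod_ite, prod_const, prod_const_one, mul_one, ← pow_mul k (2 ^ k), mul_comm, pow_mul]
    refine Nat.pow_le_pow_right pow_self_pos ?_
    exact (card_le_card fun q hq => mem_range.mpr (mem_filter.mp hq).2).trans_eq (card_range _)
  calc #n.divisors ^ k = ∏ q ∈ n.primeFactors, (n.factorization q + 1) ^ k := by
        rw [card_divisors hn, prod_pow]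
    _ ≤ ∏ q ∈ n.primeFactors, (if q < 2 ^ k then k ^ k else 1) * q ^ n.factorization q :=
        prod_le_prod' fun q hq => succ_pow_le_mul_pow k _ (prime_of_mem_primeFactors hq).two_le
    _ ≤ (k ^ 2 ^ k) ^ k * n := by
        rw [prod_mul_distrib]
        refine Nat.mul_le_mul hsmall (le_of_eq ?_)
        rw [← support_factorization]
        exact prod_factorization_pow_eq_self hn

lemma card_divisors_le_mul_rpow {k : ℕ} (hk : k ≠ 0) {n : ℕ} (hn : n ≠ 0) :
    (#n.divisors : ℝ) ≤ (k : ℝ) ^ 2 ^ k * (n : ℝ) ^ (k⁻¹ : ℝ) := by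
  have h : ((#n.divisors ^ k : ℕ) : ℝ) ≤ (((k ^ 2 ^ k) ^ k * n : ℕ) : ℝ) :=
    cast_le.mpr (card_divisors_pow_le k hn)
  push_cast at h
  calc (#n.divisors : ℝ) = ((#n.divisors : ℝ) ^ k) ^ (k⁻¹ : ℝ) :=
        (Real.pow_rpow_inv_natCast (by positivity) hk).symm
    _ ≤ (((k : ℝ) ^ 2 ^ k) ^ k * n) ^ (k⁻¹ : ℝ) := by gcongr
    _ = (k : ℝ) ^ 2 ^ k * (n : ℝ) ^ (k⁻¹ : ℝ) := by
        rw [Real.mul_rpow (by positivity) (by positivity),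
          Real.pow_rpow_inv_natCast (by positivity) hk]

end Nat

lemma sum_orderOf_eq_sum_moebius_smul {G R : Type*} [Monoid G] [Fintype G] [DecidableEq G]
    [AddCommGroup R] (f : G → R) {n : ℕ} (hn : 0 < n) :
    ∑ u with orderOf u = n, f u
      = ∑ x ∈ n.divisorsAntidiagonal, μ x.1 • ∑ u with u ^ x.2 = 1, f u := by
  refine (sum_eq_iff_sum_smul_moebius_eq (f := fun d => ∑ u with orderOf u = d, f u)
    (g := fun m => ∑ u with u ^ m = 1, f u) |>.mp (fun m hm => ?_) n hn).symm
  rw [← sum_fiberwise_of_maps_to (g := orderOf) (t := m.divisors) fun u hu =>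
    Nat.mem_divisors.mpr ⟨orderOf_dvd_of_pow_eq_one (mem_filter.mp hu).2, hm.ne'⟩]
  refine sum_congr rfl fun d hd => sum_congr ?_ fun _ _ => rfl
  rw [filter_filter]
  refine filter_congr fun u _ => ⟨fun h => ⟨?_, h⟩, fun h => h.2⟩
  rw [← orderOf_dvd_iff_pow_eq_one, h]
  exact Nat.dvd_of_mem_divisors hd

lemma MonoidHom.sum_comp_eq_card_ker_smul {G M R : Type*} [Group G] [Fintype G] [Group M]
    [DecidableEq M] [AddCommMonoid R] (f : G →* M) (v : M → R) :
    ∑ g, v (f g) = Nat.card f.ker • ∑ y : f.range, v y := by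
  have hker : Nat.card f.ker = #{g | f g = 1} := by
    rw [← Fintype.card_subtype, ← Nat.card_eq_fintype_card]
    exact Nat.card_congr (Equiv.subtypeEquivRight fun _ => f.mem_ker)
  rw [sum_comp, smul_sum,
    ← sum_subtype (p := (· ∈ f.range)) (univ.image f) (by simp) fun y => Nat.card f.ker • v y]
  refine sum_congr rfl fun y hy => ?_
  rw [hker, card_fiber_eq_of_mem_range f (by simpa using hy) ⟨1, map_one f⟩]

namespace AddChar

variable {F : Type*} [Field F] [Fintype F] {ψ : AddChar F ℂ}

lemma sum_norm_sq_sum_subgroup (hψ : ψ.IsPrimitive) (H : Subgroup Fˣ) [Fintype H] :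
    ∑ c : F, ‖∑ h : H, ψ (c * ((h : Fˣ) : F))‖ ^ 2 = Fintype.card F * Fintype.card H := by
  classical
  have hcoe : ∀ h h' : H, ((h' : Fˣ) : F) - ((h : Fˣ) : F) = 0 ↔ h' = h := fun h h' => by
    rw [sub_eq_zero, Units.val_inj, Subtype.coe_inj]
  have hC : ∑ c : F, ((‖∑ h : H, ψ (c * ((h : Fˣ) : F))‖ ^ 2 : ℝ) : ℂ)
      = Fintype.card F * Fintype.card H := by
    calc ∑ c : F, ((‖∑ h : H, ψ (c * ((h : Fˣ) : F))‖ ^ 2 : ℝ) : ℂ)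
        = ∑ h : H, ∑ h' : H, ∑ c : F, ψ (c * (((h' : Fˣ) : F) - ((h : Fˣ) : F))) := by
          simp only [Complex.ofReal_pow, ← Complex.mul_conj', map_sum, sum_mul, mul_sum,
            ← map_neg_eq_conj, ← map_add_eq_mul, sub_eq_add_neg, mul_add, mul_neg]
          rw [sum_comm]
          exact sum_congr rfl fun _ _ => sum_comm
      _ = ∑ h : H, ∑ h' : H, if h' = h then (Fintype.card F : ℂ) else 0 := by
          simp only [sum_mulShift _ hψ, hcoe, Nat.cast_ite, Nat.cast_zero]
      _ = Fintype.card F * Fintype.card H := by simp [mul_comm]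
  exact_mod_cast hC

lemma norm_sum_subgroup_le_sqrt (hψ : ψ.IsPrimitive) (H : Subgroup Fˣ) [Fintype H]
    {β : F} (hβ : β ≠ 0) :
    ‖∑ h : H, ψ (β * ((h : Fˣ) : F))‖ ≤ √(Fintype.card F) := by
  classical
  set f : F → ℂ := fun c => ∑ h : H, ψ (c * ((h : Fˣ) : F))
  have hinv : ∀ h₀ : H, f (β * ((h₀ : Fˣ) : F)) = f β := fun h₀ => by
    simp only [f, mul_assoc, ← Subgroup.coe_mul, ← Units.val_mul]
    exact Equiv.sum_comp (Equiv.mulLeft h₀) fun h => ψ (β * ((h : Fˣ) : F))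
  have hle : Fintype.card H * ‖f β‖ ^ 2 ≤ Fintype.card F * Fintype.card H := by
    rw [← sum_norm_sq_sum_subgroup hψ H]
    calc (Fintype.card H : ℝ) * ‖f β‖ ^ 2 = ∑ h : H, ‖f (β * ((h : Fˣ) : F))‖ ^ 2 := by simp [hinv]
      _ = ∑ c ∈ univ.image fun h : H => β * ((h : Fˣ) : F), ‖f c‖ ^ 2 :=
          (sum_image (f := fun c => ‖f c‖ ^ 2)
            fun _ _ _ _ e => Subtype.ext (Units.ext (mul_left_cancel₀ hβ e))).symm
      _ ≤ ∑ c : F, ‖f c‖ ^ 2 := sum_le_univ_sum_of_nonneg fun _ => by positivity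
  have hH : (0 : ℝ) < Fintype.card H := by exact_mod_cast Fintype.card_pos
  exact Real.le_sqrt_of_sq_le (by nlinarith)

lemma norm_sum_rootsOfUnity_pow_le [DecidableEq F] (hψ : ψ.IsPrimitive) {β : F} (hβ : β ≠ 0)
    {m : ℕ} (hm : m ≠ 0) (x : ℕ) :
    ‖∑ u : Fˣ with u ^ m = 1, ψ (β * (u : F) ^ x)‖ ≤ m.gcd x * √(Fintype.card F) := by
  classical
  have : NeZero (m.gcd x) := ⟨Nat.gcd_ne_zero_left hm⟩
  let G := rootsOfUnity m F
  let f : G →* Fˣ := (powMonoidHom x).comp G.subtype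
  have hker : Nat.card f.ker ≤ m.gcd x := calc
    Nat.card f.ker = Nat.card (f.ker.map G.subtype) :=
      (Subgroup.card_map_of_injective G.subtype_injective).symm
    _ ≤ Nat.card (rootsOfUnity (m.gcd x) F) := Subgroup.card_le_of_le <| by
      rintro _ ⟨g, hg, rfl⟩
      exact pow_gcd_eq_one.mpr ⟨g.2, hg⟩
    _ ≤ m.gcd x := card_rootsOfUnity F _
  have hsum : ∑ u : Fˣ with u ^ m = 1, ψ (β * (u : F) ^ x)
      = Nat.card f.ker • ∑ y : f.range, ψ (β * ((y : Fˣ) : F)) := by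
    rw [← f.sum_comp_eq_card_ker_smul fun y => ψ (β * (y : F)),
      sum_subtype (p := (· ∈ G)) (F := inferInstance) _ (by simp [G, mem_rootsOfUnity])]
    simp [f]
  rw [hsum, nsmul_eq_mul, norm_mul, Complex.norm_natCast]
  exact mul_le_mul (by exact_mod_cast hker) (norm_sum_subgroup_le_sqrt hψ _ hβ) (norm_nonneg _)
    (Nat.cast_nonneg _)

lemma norm_sum_orderOf_pow_le [DecidableEq F] (hψ : ψ.IsPrimitive) {β : F} (hβ : β ≠ 0) {n : ℕ}
    (hn : 0 < n) (x : ℕ) :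
    ‖∑ u : Fˣ with orderOf u = n, ψ (β * (u : F) ^ x)‖
      ≤ (∑ m ∈ n.divisors, m.gcd x : ℕ) * √(Fintype.card F) := by
  rw [sum_orderOf_eq_sum_moebius_smul _ hn, Nat.cast_sum, sum_mul,
    ← Nat.sum_divisorsAntidiagonal' fun _ m => (m.gcd x : ℝ) * √(Fintype.card F)]
  refine (norm_sum_le _ _).trans (sum_le_sum fun d hd => ?_)
  have hd₂ : d.2 ≠ 0 :=
    (Nat.pos_of_mem_divisors (Nat.snd_mem_divisors_of_mem_antidiagonal hd)).ne'
  rw [norm_zsmul ℝ, Real.norm_eq_abs, ← Int.cast_abs]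
  exact (mul_le_of_le_one_left (norm_nonneg _) (mod_cast abs_moebius_le_one)).trans
    (norm_sum_rootsOfUnity_pow_le hψ hβ hd₂ x)

lemma norm_sum_orderOf_twisted_le [DecidableEq F] (hψ : ψ.IsPrimitive) {β : F} (hβ : β ≠ 0)
    {n : ℕ} (hn : 0 < n) (w : ℕ → ℂ) (hw : ∀ x, ‖w x‖ ≤ 1) {N : ℕ} (hN : N ≤ n) :
    ‖∑ u : Fˣ with orderOf u = n, ∑ x ∈ Icc 1 N, w x * ψ (β * (u : F) ^ x)‖
      ≤ φ n * #n.divisors ^ 3 * √(Fintype.card F) := by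
  have hgcd : ∑ x ∈ Icc 1 N, ∑ m ∈ n.divisors, m.gcd x ≤ φ n * #n.divisors ^ 3 := calc
    _ ≤ #n.divisors ^ 2 * N := Nat.sum_sum_gcd_le hn.ne' N
    _ ≤ #n.divisors ^ 2 * (φ n * #n.divisors) :=
      Nat.mul_le_mul_left _ (hN.trans (Nat.le_totient_mul_card_divisors n))
    _ = φ n * #n.divisors ^ 3 := by ring
  rw [sum_comm]
  simp_rw [← mul_sum]
  calc _ ≤ ∑ x ∈ Icc 1 N, ‖∑ u : Fˣ with orderOf u = n, ψ (β * (u : F) ^ x)‖ :=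
        (norm_sum_le _ _).trans <| sum_le_sum fun x _ => by
          rw [norm_mul]; exact mul_le_of_le_one_left (norm_nonneg _) (hw x)
    _ ≤ ∑ x ∈ Icc 1 N, (∑ m ∈ n.divisors, m.gcd x : ℕ) * √(Fintype.card F) :=
        sum_le_sum fun x _ => norm_sum_orderOf_pow_le hψ hβ hn x
    _ ≤ φ n * #n.divisors ^ 3 * √(Fintype.card F) := by
        rw [← sum_mul, ← Nat.cast_sum]
        gcongr
        exact_mod_cast hgcd

end AddChar

lemma ZMod.sum_primitiveRoots_eq_sum_units {M : Type*} [AddCommMonoid M] (p : ℕ) [Fact p.Prime]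
    (f : ZMod p → M) :
    ∑ g ∈ (Icc 1 (p - 1)).filter (fun g : ℕ => orderOf (g : ZMod p) = p - 1), f g
      = ∑ u : (ZMod p)ˣ with orderOf u = p - 1, f u := by
  have hp := (Fact.out : p.Prime).pos
  have hne : ∀ g ∈ (Icc 1 (p - 1)).filter (fun g : ℕ => orderOf (g : ZMod p) = p - 1),
      (g : ZMod p) ≠ 0 := fun g hg => by
    obtain ⟨hg1, hgp⟩ := mem_Icc.mp (mem_filter.mp hg).1
    rw [Ne, ZMod.natCast_eq_zero_iff]
    exact fun h => absurd (Nat.le_of_dvd hg1 h) (by omega)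
  refine sum_bij' (fun g hg => Units.mk0 (g : ZMod p) (hne g hg)) (fun u _ => (u : ZMod p).val)
    (fun g hg => ?_) (fun u hu => ?_) (fun g hg => ?_) (fun u _ => ?_) (fun _ _ => rfl)
  · simpa [← orderOf_units] using (mem_filter.mp hg).2
  · have := ZMod.val_lt (u : ZMod p)
    simp only [mem_filter, mem_Icc, ZMod.natCast_val, ZMod.cast_id', id, orderOf_units]
    exact ⟨⟨(ZMod.val_pos.mpr u.ne_zero), by omega⟩, (mem_filter.mp hu).2⟩
  · exact ZMod.val_natCast_of_lt (by have := (mem_Icc.mp (mem_filter.mp hg).1).2; omega)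
  · exact Units.ext (ZMod.natCast_zmod_val _)

lemma norm_average_primitiveRoots_le (p : ℕ) [Fact p.Prime] (a b : ℤ) (hb : (b : ZMod p) ≠ 0)
    (c : ℕ → ℤ) {N : ℕ} (hN : N ≤ p - 1) :
    ‖(1 / (φ (p - 1) : ℂ)) *
        ∑ g ∈ (Icc 1 (p - 1)).filter (fun g : ℕ => orderOf (g : ZMod p) = p - 1),
          ∑ x ∈ Icc 1 N,
            Complex.exp (2 * Real.pi * Complex.I * ((a * x + b * (g : ℤ) ^ x + c x : ℤ) : ℂ) / p)‖
      ≤ #(p - 1).divisors ^ 3 * √p := by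
  have hp := (Fact.out : p.Prime).two_le
  have hφ : (0 : ℝ) < φ (p - 1) := by exact_mod_cast Nat.totient_pos.mpr (by omega)
  let ψ : AddChar (ZMod p) ℂ := ZMod.stdAddChar
  have hsplit : ∀ (g : ℕ) (x : ℕ), Complex.exp (2 * Real.pi * Complex.I *
      ((a * x + b * (g : ℤ) ^ x + c x : ℤ) : ℂ) / p)
      = ψ ((a * x + c x : ℤ) : ZMod p) * ψ ((b : ZMod p) * (g : ZMod p) ^ x) := fun g x => by
    rw [← ZMod.stdAddChar_coe, ← AddChar.map_add_eq_mul]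
    congr 1
    push_cast
    ring
  simp_rw [hsplit]
  rw [ZMod.sum_primitiveRoots_eq_sum_units p fun z => ∑ x ∈ Icc 1 N,
    ψ ((a * x + c x : ℤ) : ZMod p) * ψ ((b : ZMod p) * z ^ x)]
  have := AddChar.norm_sum_orderOf_twisted_le (ZMod.isPrimitive_stdAddChar p) hb
    (by omega : 0 < p - 1) (fun x => ψ ((a * x + c x : ℤ) : ZMod p))
    (fun x => (AddChar.norm_apply ψ _).le) hN
  rw [ZMod.card] at this
  rw [norm_mul, norm_div, norm_one, Complex.norm_natCast]
  calc 1 / (φ (p - 1) : ℝ) * _ ≤ 1 / φ (p - 1) * (φ (p - 1) * #(p - 1).divisors ^ 3 * √p) := by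
        gcongr
    _ = #(p - 1).divisors ^ 3 * √p := by field_simp

theorem stmt13 : ∀ ε > (0:ℝ), ∃ C > (0:ℝ),
    ∀ (p r : ℕ) (a b : ℤ) (bb gg : Fin r → ℤ) (N : ℕ),
    p.Prime → Odd p → 1 ≤ r → Int.gcd b p = 1 →
    (∀ i, orderOf (gg i : ZMod p) = p - 1) →
    1 ≤ N → N ≤ p - 1 →
    ‖(1 / (Nat.totient (p - 1) : ℂ)) *
        ∑ g ∈ (Finset.Icc 1 (p - 1)).filter
            (fun g : ℕ => orderOf ((g : ℕ) : ZMod p) = p - 1),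
          ∑ x ∈ Finset.Icc 1 N,
            Complex.exp (2 * Real.pi * Complex.I *
              ((a * x + b * (g : ℤ) ^ x + ∑ i, bb i * (gg i) ^ x : ℤ) : ℂ) / p)‖
      ≤ C * (p : ℝ) ^ ((23:ℝ)/24 + ε) := by
  intro ε hε
  refine ⟨((7 : ℝ) ^ 2 ^ 7) ^ 3, by positivity, ?_⟩
  rintro p r a b bb gg N hp - - hb - - hN
  have : Fact p.Prime := ⟨hp⟩
  have hb' : (b : ZMod p) ≠ 0 := fun h => hp.one_lt.ne' <| Nat.dvd_one.mp <|
    Int.natCast_dvd_natCast.mp <|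
      hb ▸ Int.dvd_coe_gcd ((ZMod.intCast_zmod_eq_zero_iff_dvd b p).mp h) dvd_rfl
  have hp1 : (1 : ℝ) ≤ p := by exact_mod_cast hp.one_lt.le
  have hdiv : (#(p - 1).divisors : ℝ) ≤ 7 ^ 2 ^ 7 * (p : ℝ) ^ (7⁻¹ : ℝ) := by
    have := Nat.card_divisors_le_mul_rpow (k := 7) (by norm_num) (n := p - 1)
      (by have := hp.two_le; omega)
    simp only [Nat.cast_ofNat] at this
    exact this.trans (by gcongr; exact_mod_cast Nat.sub_le p 1)
  calc _ ≤ #(p - 1).divisors ^ 3 * √p :=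
        norm_average_primitiveRoots_le p a b hb' (fun x => ∑ i, bb i * gg i ^ x) hN
    _ ≤ ((7 : ℝ) ^ 2 ^ 7 * (p : ℝ) ^ (7⁻¹ : ℝ)) ^ 3 * (p : ℝ) ^ (2⁻¹ : ℝ) := by
        rw [Real.sqrt_eq_rpow, one_div]
        gcongr
    _ = ((7 : ℝ) ^ 2 ^ 7) ^ 3 * (p : ℝ) ^ ((13 : ℝ) / 14) := by
        rw [mul_pow, mul_assoc, ← Real.rpow_mul_natCast (by positivity),
          ← Real.rpow_add (by positivity)]
        norm_num
    _ ≤ ((7 : ℝ) ^ 2 ^ 7) ^ 3 * (p : ℝ) ^ ((23 : ℝ) / 24 + ε) := by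
        gcongr
        linarith
end

section
/- Let p be an odd prime, λ an element of multiplicative order t = (p−1)/d modulo p for a divisor d of p−1, and a, b integers coprime to p. Then ∑_{y=1}^{p−1} |∑_{x=1}^{(p−1)/d} e^{2πi(a λ^x + b λ^{xy})/p}|^4 ≤ (d/t) p^2 T, where T is the number of solutions (x1,x2,x3,x4,y) ∈ [1,t]^5 of the simultaneous congruences λ^{x1}+λ^{x2} ≡ λ^{x3}+λ^{x4} and λ^{x1 y}+λ^{x2 y} ≡ λ^{x3 y}+λ^{x4 y} (mod p). -/
/-!
Fix `y` and write `S(A, B) = ∑_{x=1}^{t} e_p(A λ^x + B λ^{xy})`. Since `λ` has order `t`,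
replacing `(A, B)` by `(A λ^z, B λ^{zy})` only permutes the terms of `S`, and for `A ≠ 0` the `t`
pairs obtained for `0 ≤ z < t` are distinct. Hence `t |S(A, B)|^4` is at most the complete fourth moment
`∑_{α, β} |S(α, β)|^4`, which by orthogonality of the characters of `𝔽_p` equals `p^2` times the
number of solutions `(x₁, x₂, x₃, x₄)` of the two congruences. That number is `t`-periodic in `y`,
so summing over `1 ≤ y ≤ p - 1 = d t` gives `d T`.
-/

open Finset Function

namespace Function.Periodic

variable {M : Type*} [AddCommMonoid M] {f : ℕ → M} {t : ℕ}

theorem sum_Ico_add_eq_sum_range (hf : Periodic f t) (n : ℕ) :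
    ∑ x ∈ Ico n (n + t), f x = ∑ x ∈ range t, f x := by
  have := congrArg (fun s => (s.map f).sum) (Nat.multiset_Ico_map_mod n t)
  simp only [Multiset.map_map, comp_def, hf.map_mod_nat] at this
  exact this

theorem sum_Ico_comp_add (hf : Periodic f t) (n z : ℕ) :
    ∑ x ∈ Ico n (n + t), f (x + z) = ∑ x ∈ Ico n (n + t), f x := by
  rw [sum_Ico_add', add_right_comm, hf.sum_Ico_add_eq_sum_range, hf.sum_Ico_add_eq_sum_range]

theorem sum_Ico_add_mul_eq_nsmul (hf : Periodic f t) (n d : ℕ) :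
    ∑ x ∈ Ico n (n + d * t), f x = d • ∑ x ∈ Ico n (n + t), f x := by
  induction d with
  | zero => simp
  | succ d ih =>
    rw [← sum_Ico_consecutive f (n.le_add_right (d * t)) (by nlinarith), ih, add_mul, one_mul,
      ← add_assoc, hf.sum_Ico_add_eq_sum_range, hf.sum_Ico_add_eq_sum_range, succ_nsmul]

end Function.Periodic

theorem Nat.Icc_one_eq_Ico (m : ℕ) : Icc 1 m = Ico 1 (1 + m) := by
  rw [add_comm, Ico_add_one_right_eq_Icc]

theorem pow_add_orderOf_mul {M : Type*} [Monoid M] (x : M) (m k : ℕ) :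
    x ^ (m + orderOf x * k) = x ^ m := by
  rw [pow_add, pow_mul, pow_orderOf_eq_one, one_pow, mul_one]

namespace AddChar

variable {R : Type*} [CommRing R] [Fintype R] [DecidableEq R] {ψ : AddChar R ℂ}

theorem sum_sum_mul_add (hψ : ψ.IsPrimitive) (a b : R) :
    ∑ α : R, ∑ β : R, ψ (α * a + β * b) =
      if a = 0 ∧ b = 0 then (Fintype.card R : ℂ) ^ 2 else 0 := by
  simp only [map_add_eq_mul, ← mul_sum, ← sum_mul, sum_mulShift _ hψ]
  split_ifs <;> simp_all [sq]

theorem sum_sum_norm_sum_sq (hψ : ψ.IsPrimitive) {ι : Type*} (s : Finset ι) (u v : ι → R) :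
    ∑ α : R, ∑ β : R, ‖∑ i ∈ s, ψ (α * u i + β * v i)‖ ^ 2 =
      Fintype.card R ^ 2 * #{w ∈ s ×ˢ s | u w.1 = u w.2 ∧ v w.1 = v w.2} := by
  have hsq (α β : R) : (‖∑ i ∈ s, ψ (α * u i + β * v i)‖ : ℂ) ^ 2 =
      ∑ w ∈ s ×ˢ s, ψ (α * (u w.1 - u w.2) + β * (v w.1 - v w.2)) := by
    rw [← Complex.mul_conj', map_sum, sum_mul_sum, sum_product]
    refine sum_congr rfl fun i _ => sum_congr rfl fun j _ => ?_
    rw [← map_neg_eq_conj, ← map_add_eq_mul]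
    ring_nf
  apply Complex.ofReal_injective
  push_cast
  simp only [hsq]
  rw [sum_congr rfl fun α _ => sum_comm, sum_comm]
  simp only [sum_sum_mul_add hψ, sub_eq_zero]
  rw [← sum_filter, sum_const, nsmul_eq_mul, mul_comm]

theorem sum_sum_norm_sum_pow_four (hψ : ψ.IsPrimitive) {ι : Type*} (s : Finset ι)
    (u v : ι → R) :
    ∑ α : R, ∑ β : R, ‖∑ i ∈ s, ψ (α * u i + β * v i)‖ ^ 4 =
      Fintype.card R ^ 2 * #{w ∈ (s ×ˢ s) ×ˢ (s ×ˢ s) |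
        u w.1.1 + u w.1.2 = u w.2.1 + u w.2.2 ∧ v w.1.1 + v w.1.2 = v w.2.1 + v w.2.2} := by
  have hsq (α β : R) : (∑ i ∈ s, ψ (α * u i + β * v i)) ^ 2 =
      ∑ w ∈ s ×ˢ s, ψ (α * (u w.1 + u w.2) + β * (v w.1 + v w.2)) := by
    rw [sq, sum_mul_sum, sum_product]
    refine sum_congr rfl fun i _ => sum_congr rfl fun j _ => ?_
    rw [← map_add_eq_mul]
    ring_nf
  have h4 (z : ℂ) : ‖z‖ ^ 4 = ‖z ^ 2‖ ^ 2 := by rw [norm_pow, ← pow_mul]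
  simp only [h4, hsq]
  exact sum_sum_norm_sum_sq hψ (s ×ˢ s) _ _

end AddChar

section PowerSums

variable {F : Type*} [Field F] [DecidableEq F]

/-- The additive energy of `{(λ^x, λ^{xy}) : 1 ≤ x ≤ ord λ} ⊆ F × F`. -/
noncomputable def pairEnergy (lam : F) (y : ℕ) : ℕ :=
  #{w ∈ (Icc 1 (orderOf lam) ×ˢ Icc 1 (orderOf lam)) ×ˢ
      (Icc 1 (orderOf lam) ×ˢ Icc 1 (orderOf lam)) |
    lam ^ w.1.1 + lam ^ w.1.2 = lam ^ w.2.1 + lam ^ w.2.2 ∧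
      lam ^ (w.1.1 * y) + lam ^ (w.1.2 * y) = lam ^ (w.2.1 * y) + lam ^ (w.2.2 * y)}

theorem pairEnergy_periodic (lam : F) : Periodic (pairEnergy lam) (orderOf lam) := fun y => by
  have h (x : ℕ) : lam ^ (x * (y + orderOf lam)) = lam ^ (x * y) := by
    rw [mul_add, mul_comm x (orderOf lam), pow_add_orderOf_mul]
  simp only [pairEnergy, h]

theorem sum_pairEnergy_eq_card (lam : F) :
    ∑ y ∈ Icc 1 (orderOf lam), pairEnergy lam y =
      #{q ∈ Icc 1 (orderOf lam) ×ˢ Icc 1 (orderOf lam) ×ˢ Icc 1 (orderOf lam) ×ˢ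
          Icc 1 (orderOf lam) ×ˢ Icc 1 (orderOf lam) |
        lam ^ q.1 + lam ^ q.2.1 = lam ^ q.2.2.1 + lam ^ q.2.2.2.1 ∧
          lam ^ (q.1 * q.2.2.2.2) + lam ^ (q.2.1 * q.2.2.2.2) =
            lam ^ (q.2.2.1 * q.2.2.2.2) + lam ^ (q.2.2.2.1 * q.2.2.2.2)} := by
  rw [card_eq_sum_card_fiberwise (f := fun q => q.2.2.2.2) (t := Icc 1 (orderOf lam))
    (fun q hq => by simp only [coe_filter, mem_product] at hq; exact hq.1.2.2.2.2)]
  refine sum_congr rfl fun y hy => card_nbij' (fun w => (w.1.1, w.1.2, w.2.1, w.2.2, y))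
    (fun q => ((q.1, q.2.1), (q.2.2.1, q.2.2.2.1))) ?_ ?_ ?_ ?_
  · intro w hw
    simp_all
  · rintro ⟨x₁, x₂, x₃, x₄, z⟩ hq
    obtain ⟨hq, rfl⟩ := mem_filter.mp hq
    simp_all
  · intro w _
    rfl
  · rintro ⟨x₁, x₂, x₃, x₄, z⟩ hq
    obtain ⟨hq, rfl⟩ := mem_filter.mp hq
    simp_all

theorem sum_Icc_mul_orderOf_pairEnergy (lam : F) (d : ℕ) :
    ∑ y ∈ Icc 1 (d * orderOf lam), pairEnergy lam y =
      d * ∑ y ∈ Icc 1 (orderOf lam), pairEnergy lam y := by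
  rw [Nat.Icc_one_eq_Ico, Nat.Icc_one_eq_Ico, (pairEnergy_periodic lam).sum_Ico_add_mul_eq_nsmul,
    smul_eq_mul]

theorem orderOf_mul_norm_sum_pow_four_le [Fintype F] {ψ : AddChar F ℂ} (hψ : ψ.IsPrimitive)
    (lam : F) {A : F} (hA : A ≠ 0) (B : F) (y : ℕ) :
    orderOf lam * ‖∑ x ∈ Icc 1 (orderOf lam), ψ (A * lam ^ x + B * lam ^ (x * y))‖ ^ 4 ≤
      Fintype.card F ^ 2 * pairEnergy lam y := by
  set S : F → F → ℂ := fun α β =>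
    ∑ x ∈ Icc 1 (orderOf lam), ψ (α * lam ^ x + β * lam ^ (x * y))
  have hper : Periodic (fun x => ψ (A * lam ^ x + B * lam ^ (x * y))) (orderOf lam) :=
    fun x => by
      dsimp only
      rw [add_mul, pow_add_orderOf_mul, pow_add, pow_orderOf_eq_one, mul_one]
  have hshift (z : ℕ) : S (A * lam ^ z) (B * lam ^ (z * y)) = S A B := by
    calc S (A * lam ^ z) (B * lam ^ (z * y))
        = ∑ x ∈ Ico 1 (1 + orderOf lam), ψ (A * lam ^ (x + z) + B * lam ^ ((x + z) * y)) := by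
          rw [← Nat.Icc_one_eq_Ico]
          refine sum_congr rfl fun x _ => ?_
          rw [add_mul, pow_add, pow_add]
          ring_nf
      _ = S A B := by rw [hper.sum_Ico_comp_add, ← Nat.Icc_one_eq_Ico]
  have hinj : Set.InjOn (fun z => (A * lam ^ z, B * lam ^ (z * y))) (range (orderOf lam)) :=
    fun z hz z' hz' h => pow_injOn_Iio_orderOf (by simpa using hz) (by simpa using hz')
      (mul_left_cancel₀ hA (congrArg Prod.fst h))
  calc (orderOf lam : ℝ) * ‖S A B‖ ^ 4
      = ∑ z ∈ range (orderOf lam), ‖S (A * lam ^ z) (B * lam ^ (z * y))‖ ^ 4 := by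
        simp [hshift]
    _ = ∑ w ∈ (range (orderOf lam)).image (fun z => (A * lam ^ z, B * lam ^ (z * y))),
          ‖S w.1 w.2‖ ^ 4 := by rw [sum_image hinj]
    _ ≤ ∑ w : F × F, ‖S w.1 w.2‖ ^ 4 := sum_le_univ_sum_of_nonneg fun _ => by positivity
    _ = Fintype.card F ^ 2 * (pairEnergy lam y : ℝ) := by
        rw [Fintype.sum_prod_type, pairEnergy]
        exact AddChar.sum_sum_norm_sum_pow_four hψ _ (lam ^ ·) (fun x => lam ^ (x * y))

end PowerSums

theorem stmt14_general (p d : ℕ) (l a b : ℤ)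
    (hp : p.Prime) (hd : d ∣ (p - 1))
    (ht : orderOf (l : ZMod p) = (p - 1) / d)
    (ha : Int.gcd a p = 1) :
    ∑ y ∈ Finset.Icc 1 (p - 1),
        (‖∑ x ∈ Finset.Icc 1 ((p - 1) / d),
          Complex.exp (2 * Real.pi * Complex.I *
            ((a * l ^ x + b * l ^ (x * y) : ℤ) : ℂ) / p)‖) ^ 4
      ≤ ((d : ℝ) / ((p - 1) / d : ℕ)) * (p : ℝ) ^ 2 *
        ((((Finset.Icc 1 ((p - 1) / d)) ×ˢ (Finset.Icc 1 ((p - 1) / d)) ×ˢ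
            (Finset.Icc 1 ((p - 1) / d)) ×ˢ (Finset.Icc 1 ((p - 1) / d)) ×ˢ
            (Finset.Icc 1 ((p - 1) / d))).filter (fun q : ℕ × ℕ × ℕ × ℕ × ℕ =>
          (l : ZMod p) ^ q.1 + (l : ZMod p) ^ q.2.1
            = (l : ZMod p) ^ q.2.2.1 + (l : ZMod p) ^ q.2.2.2.1 ∧
          (l : ZMod p) ^ (q.1 * q.2.2.2.2) + (l : ZMod p) ^ (q.2.1 * q.2.2.2.2)
            = (l : ZMod p) ^ (q.2.2.1 * q.2.2.2.2)
              + (l : ZMod p) ^ (q.2.2.2.1 * q.2.2.2.2))).card : ℝ) := by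
  have := Fact.mk hp
  have hA : (a : ZMod p) ≠ 0 := ((ZMod.coe_int_isUnit_iff_isCoprime a p).mpr
    (Int.isCoprime_iff_gcd_eq_one.mpr (by rwa [Int.gcd_comm]))).ne_zero
  have hp1 : 0 < p - 1 := Nat.sub_pos_of_lt hp.one_lt
  have ht0 : 0 < orderOf (l : ZMod p) :=
    ht ▸ Nat.div_pos (Nat.le_of_dvd hp1 hd) (Nat.pos_of_dvd_of_pos hd hp1)
  have hpd : p - 1 = d * orderOf (l : ZMod p) := by rw [ht, Nat.mul_div_cancel' hd]
  have hexp (x y : ℕ) : Complex.exp (2 * Real.pi * Complex.I *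
      ((a * l ^ x + b * l ^ (x * y) : ℤ) : ℂ) / p) =
        ZMod.stdAddChar ((a : ZMod p) * (l : ZMod p) ^ x +
          (b : ZMod p) * (l : ZMod p) ^ (x * y)) := by
    rw [← ZMod.stdAddChar_coe]
    push_cast
    rfl
  simp only [hexp]
  rw [← ht, ← sum_pairEnergy_eq_card, div_mul_eq_mul_div, div_mul_eq_mul_div,
    le_div_iff₀ (Nat.cast_pos.mpr ht0), hpd]
  calc (∑ y ∈ Icc 1 (d * orderOf (l : ZMod p)), _) * (orderOf (l : ZMod p) : ℝ)
      ≤ ∑ y ∈ Icc 1 (d * orderOf (l : ZMod p)), (p : ℝ) ^ 2 * pairEnergy (l : ZMod p) y := by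
        rw [sum_mul]
        refine sum_le_sum fun y _ => ?_
        have := orderOf_mul_norm_sum_pow_four_le (ZMod.isPrimitive_stdAddChar p) (l : ZMod p) hA
          (b : ZMod p) y
        rwa [ZMod.card, mul_comm (orderOf _ : ℝ)] at this
    _ = _ := by
        rw [← mul_sum, ← Nat.cast_sum, sum_Icc_mul_orderOf_pairEnergy]
        push_cast
        ring

theorem stmt14 (p d : ℕ) (l a b : ℤ)
    (hp : p.Prime) (hodd : Odd p) (hd : d ∣ (p - 1))
    (ht : orderOf (l : ZMod p) = (p - 1) / d)
    (ha : Int.gcd a p = 1) (hb : Int.gcd b p = 1) :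
    ∑ y ∈ Finset.Icc 1 (p - 1),
        (‖∑ x ∈ Finset.Icc 1 ((p - 1) / d),
          Complex.exp (2 * Real.pi * Complex.I *
            ((a * l ^ x + b * l ^ (x * y) : ℤ) : ℂ) / p)‖) ^ 4
      ≤ ((d : ℝ) / ((p - 1) / d : ℕ)) * (p : ℝ) ^ 2 *
        ((((Finset.Icc 1 ((p - 1) / d)) ×ˢ (Finset.Icc 1 ((p - 1) / d)) ×ˢ
            (Finset.Icc 1 ((p - 1) / d)) ×ˢ (Finset.Icc 1 ((p - 1) / d)) ×ˢ
            (Finset.Icc 1 ((p - 1) / d))).filter (fun q : ℕ × ℕ × ℕ × ℕ × ℕ =>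
          (l : ZMod p) ^ q.1 + (l : ZMod p) ^ q.2.1
            = (l : ZMod p) ^ q.2.2.1 + (l : ZMod p) ^ q.2.2.2.1 ∧
          (l : ZMod p) ^ (q.1 * q.2.2.2.2) + (l : ZMod p) ^ (q.2.1 * q.2.2.2.2)
            = (l : ZMod p) ^ (q.2.2.1 * q.2.2.2.2)
              + (l : ZMod p) ^ (q.2.2.2.1 * q.2.2.2.2))).card : ℝ) :=
  stmt14_general p d l a b hp hd ht ha
end
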